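/- Let X₀ be an n×d real matrix and (A; B) a full-rank (n+d)×d matrix with s := ‖sin∠(col((A;B)), col((X₀;−I)))‖ < 1/√(1+‖X₀‖²). Then B is nonsingular and ‖A B⁻¹ + X₀‖ ≤ (1+‖X₀‖²)(‖X₀‖s² + s√(1−s²)) / (1 − (1+‖X₀‖²)s²). -/

import Mathlib

noncomputable section
open Matrix

/-- Spectral (operator 2-) norm of a real matrix. -/
noncomputable def specNorm {m n : ℕ} (M : Matrix (Fin m) (Fin n) ℝ) : ℝ :=
  ‖LinearMap.toContinuousLinearMap (Matrix.toEuclideanLin M)‖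

/-- Orthogonal projector onto a subspace, as a continuous linear map on the whole space. -/
noncomputable def projCLM {ι : Type*} [Fintype ι] (W : Submodule ℝ (EuclideanSpace ℝ ι)) :
    EuclideanSpace ℝ ι →L[ℝ] EuclideanSpace ℝ ι :=
  W.subtypeL.comp (W.orthogonalProjection)

/-- ‖sin∠(V,W)‖ = ‖P_V (I − P_W)‖, the largest sine of canonical angles. -/
noncomputable def sinAngle {ι : Type*} [Fintype ι]
    (V W : Submodule ℝ (EuclideanSpace ℝ ι)) : ℝ :=
  ‖(projCLM V).comp (ContinuousLinearMap.id ℝ (EuclideanSpace ℝ ι) - projCLM W)‖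

/-- Column space of a matrix, as a subspace of Euclidean space. -/
noncomputable def colSpaceE {ι κ : Type*} [Fintype ι] [Fintype κ] [DecidableEq κ]
    (M : Matrix ι κ ℝ) : Submodule ℝ (EuclideanSpace ℝ ι) :=
  LinearMap.range (Matrix.toEuclideanLin M)

/-!
For `v = (u; x)` the map `(u; x) ↦ u + X₀ x` vanishes on `col (X₀; -I)` and has norm at most
`√(1 + ‖X₀‖²)`; since `v ∈ col (A; B)` lies within `s ‖v‖` of its projection onto `col (X₀; -I)`,
this gives `‖u + X₀ x‖ ≤ √(1 + ‖X₀‖²) s ‖v‖` with `√(1 + ‖X₀‖²) s < 1`. For `x ∈ ker B` this forces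
`A x = 0`, so `x = 0` by the rank condition. For `(u; x) = (A B⁻¹ z; z)` it gives a quadratic
inequality for `c = ‖(A B⁻¹ + X₀) z‖` in terms of `‖z‖`, whose positive root is the bound.
-/
theorem Matrix.ker_mulVecLin_eq_bot_of_rank_eq {m n K : Type*} [Fintype n] [Field K]
    {M : Matrix m n K} (hM : M.rank = Fintype.card n) : LinearMap.ker M.mulVecLin = ⊥ := by
  have h := LinearMap.finrank_range_add_finrank_ker M.mulVecLin
  rw [Module.finrank_fintype_fun_eq_card, ← Matrix.rank, hM, add_eq_left] at h
  exact Submodule.finrank_eq_zero.mp h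

theorem Matrix.isUnit_det_of_rank_fromRows {m n K : Type*} [Fintype n] [DecidableEq n] [Field K]
    (A : Matrix m n K) (B : Matrix n n K) (hrank : (fromRows A B).rank = Fintype.card n)
    (hker : ∀ x, B *ᵥ x = 0 → A *ᵥ x = 0) : IsUnit B.det := by
  rw [isUnit_iff_ne_zero]
  intro hdet
  obtain ⟨x, hx, hBx⟩ := exists_mulVec_eq_zero_iff.mpr hdet
  have hx' : x ∈ LinearMap.ker (fromRows A B).mulVecLin := by
    simp [fromRows_mulVec, hBx, hker x hBx]
  simp [ker_mulVecLin_eq_bot_of_rank_eq hrank, hx] at hx'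

theorem projCLM_eq_starProjection {ι : Type*} [Fintype ι] (W : Submodule ℝ (EuclideanSpace ℝ ι)) :
    projCLM W = W.starProjection :=
  rfl

theorem norm_sub_projCLM_le_sinAngle {ι : Type*} [Fintype ι]
    {V W : Submodule ℝ (EuclideanSpace ℝ ι)} {v : EuclideanSpace ℝ ι} (hv : v ∈ V) :
    ‖v - projCLM W v‖ ≤ sinAngle V W * ‖v‖ := by
  set T := (projCLM V).comp (ContinuousLinearMap.id ℝ _ - projCLM W)
  have hadj : ContinuousLinearMap.adjoint T =
      (ContinuousLinearMap.id ℝ _ - projCLM W).comp (projCLM V) := by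
    simp only [T, projCLM_eq_starProjection, ContinuousLinearMap.adjoint_comp, map_sub,
      ContinuousLinearMap.adjoint_id, (isSelfAdjoint_starProjection _).adjoint_eq]
  have hTv : v - projCLM W v = ContinuousLinearMap.adjoint T v := by
    simp [hadj, projCLM_eq_starProjection, Submodule.starProjection_eq_self_iff.mpr hv]
  calc ‖v - projCLM W v‖ ≤ ‖ContinuousLinearMap.adjoint T‖ * ‖v‖ :=
        hTv ▸ (ContinuousLinearMap.adjoint T).le_opNorm v
    _ = sinAngle V W * ‖v‖ := by rw [ContinuousLinearMap.adjoint.norm_map]; rfl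

section BlockVec

variable {ι κ : Type*}

def blockVec (u : EuclideanSpace ℝ ι) (x : EuclideanSpace ℝ κ) : EuclideanSpace ℝ (ι ⊕ κ) :=
  WithLp.toLp 2 (Sum.elim u.ofLp x.ofLp)

theorem norm_blockVec_sq [Fintype ι] [Fintype κ] (u : EuclideanSpace ℝ ι)
    (x : EuclideanSpace ℝ κ) : ‖blockVec u x‖ ^ 2 = ‖u‖ ^ 2 + ‖x‖ ^ 2 := by
  simp [blockVec, EuclideanSpace.norm_sq_eq, Fintype.sum_sum_type]

theorem norm_blockVec_zero_right [Fintype ι] [Fintype κ] (u : EuclideanSpace ℝ ι) :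
    ‖blockVec u (0 : EuclideanSpace ℝ κ)‖ = ‖u‖ := by
  rw [← sq_eq_sq₀ (norm_nonneg _) (norm_nonneg _), norm_blockVec_sq, norm_zero,
    zero_pow two_ne_zero, add_zero]

theorem blockVec_sub (u u' : EuclideanSpace ℝ ι) (x x' : EuclideanSpace ℝ κ) :
    blockVec u x - blockVec u' x' = blockVec (u - u') (x - x') := by
  ext (i | i) <;> rfl

theorem toEuclideanLin_fromRows {μ : Type*} [Fintype μ] [DecidableEq μ]
    (M : Matrix ι μ ℝ) (N : Matrix κ μ ℝ) (x : EuclideanSpace ℝ μ) :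
    toEuclideanLin (fromRows M N) x = blockVec (toEuclideanLin M x) (toEuclideanLin N x) := by
  ext (i | i) <;> rfl

end BlockVec

theorem norm_toEuclideanLin_le_specNorm_mul {m n : ℕ} (M : Matrix (Fin m) (Fin n) ℝ)
    (x : EuclideanSpace ℝ (Fin n)) : ‖toEuclideanLin M x‖ ≤ specNorm M * ‖x‖ :=
  (LinearMap.toContinuousLinearMap (toEuclideanLin M)).le_opNorm x

theorem norm_add_toEuclideanLin_le {n d : ℕ} (X : Matrix (Fin n) (Fin d) ℝ)
    (u : EuclideanSpace ℝ (Fin n)) (x : EuclideanSpace ℝ (Fin d)) :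
    ‖u + toEuclideanLin X x‖ ≤ √(1 + specNorm X ^ 2) * ‖blockVec u x‖ := by
  have hX := norm_toEuclideanLin_le_specNorm_mul X x
  have hX0 : 0 ≤ specNorm X := norm_nonneg _
  rw [← Real.sqrt_sq (norm_nonneg (blockVec u x)), ← Real.sqrt_mul (by positivity),
    norm_blockVec_sq]
  refine Real.le_sqrt_of_sq_le ?_
  calc ‖u + toEuclideanLin X x‖ ^ 2 ≤ (‖u‖ + specNorm X * ‖x‖) ^ 2 := by
        gcongr
        exact (norm_add_le _ _).trans (by gcongr)
    _ ≤ (1 + specNorm X ^ 2) * (‖u‖ ^ 2 + ‖x‖ ^ 2) := by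
        nlinarith [sq_nonneg (specNorm X * ‖u‖ - ‖x‖)]

theorem norm_add_toEuclideanLin_le_of_mem {n d : ℕ} (X : Matrix (Fin n) (Fin d) ℝ)
    (u : EuclideanSpace ℝ (Fin n)) (x : EuclideanSpace ℝ (Fin d))
    {w : EuclideanSpace ℝ (Fin n ⊕ Fin d)}
    (hw : w ∈ colSpaceE (fromRows X (-1 : Matrix (Fin d) (Fin d) ℝ))) :
    ‖u + toEuclideanLin X x‖ ≤ √(1 + specNorm X ^ 2) * ‖blockVec u x - w‖ := by
  obtain ⟨y, rfl⟩ := hw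
  have hneg : toEuclideanLin (-1 : Matrix (Fin d) (Fin d) ℝ) y = -y := by simp
  convert norm_add_toEuclideanLin_le X (u - toEuclideanLin X y) (x + y) using 2
  · rw [map_add, sub_add_add_cancel]
  · rw [toEuclideanLin_fromRows, hneg, blockVec_sub, sub_neg_eq_add]

theorem norm_add_toEuclideanLin_le_sinAngle {n d : ℕ} (X : Matrix (Fin n) (Fin d) ℝ)
    {V : Submodule ℝ (EuclideanSpace ℝ (Fin n ⊕ Fin d))} {u : EuclideanSpace ℝ (Fin n)}
    {x : EuclideanSpace ℝ (Fin d)} (hV : blockVec u x ∈ V) :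
    ‖u + toEuclideanLin X x‖ ≤ √(1 + specNorm X ^ 2) *
      (sinAngle V (colSpaceE (fromRows X (-1 : Matrix (Fin d) (Fin d) ℝ))) * ‖blockVec u x‖) :=
  (norm_add_toEuclideanLin_le_of_mem X u x (Submodule.starProjection_apply_mem _ _)).trans
    (mul_le_mul_of_nonneg_left (norm_sub_projCLM_le_sinAngle hV) (Real.sqrt_nonneg _))

/-- The bound is the positive root in `c` of `(1 - τ) c² - 2 τ a r c - τ (1 + a²) r² = 0`,
`τ = (1 + a²) s²`. -/
theorem le_mul_of_sq_le_sin_sq_mul {a s c r : ℝ} (hs : 0 ≤ s) (hr : 0 ≤ r)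
    (hτ : (1 + a ^ 2) * s ^ 2 < 1)
    (h : c ^ 2 ≤ (1 + a ^ 2) * s ^ 2 * ((c + a * r) ^ 2 + r ^ 2)) :
    c ≤ (1 + a ^ 2) * (a * s ^ 2 + s * √(1 - s ^ 2)) / (1 - (1 + a ^ 2) * s ^ 2) * r := by
  set g := √(1 - s ^ 2)
  have hg : 0 ≤ g := Real.sqrt_nonneg _
  have hg2 : g ^ 2 = 1 - s ^ 2 := Real.sq_sqrt (by nlinarith)
  have hden : 0 < 1 - (1 + a ^ 2) * s ^ 2 := by linarith
  rw [div_mul_eq_mul_div, le_div_iff₀ hden]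
  have hq2 : ((1 + a ^ 2) * s * g * r) ^ 2 =
      (1 + a ^ 2) * s ^ 2 * ((1 + a ^ 2) - (1 + a ^ 2) * s ^ 2) * r ^ 2 := by
    linear_combination ((1 + a ^ 2) ^ 2 * s ^ 2 * r ^ 2) * hg2
  have hp2 : ((1 - (1 + a ^ 2) * s ^ 2) * c - (1 + a ^ 2) * s ^ 2 * a * r) ^ 2 ≤
      ((1 + a ^ 2) * s * g * r) ^ 2 := by
    rw [hq2]
    nlinarith [mul_nonneg hden.le (sub_nonneg.mpr h)]
  have hq : 0 ≤ (1 + a ^ 2) * s * g * r := by positivity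
  nlinarith [sq_nonneg ((1 - (1 + a ^ 2) * s ^ 2) * c - (1 + a ^ 2) * s ^ 2 * a * r +
    (1 + a ^ 2) * s * g * r)]

theorem specNorm_add_le_of_norm_le_blockVec {n d : ℕ} (Y X : Matrix (Fin n) (Fin d) ℝ) {s : ℝ}
    (hs : 0 ≤ s) (hτ : (1 + specNorm X ^ 2) * s ^ 2 < 1)
    (h : ∀ z, ‖toEuclideanLin Y z + toEuclideanLin X z‖ ≤
      √(1 + specNorm X ^ 2) * (s * ‖blockVec (toEuclideanLin Y z) z‖)) :
    specNorm (Y + X) ≤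
      (1 + specNorm X ^ 2) * (specNorm X * s ^ 2 + s * √(1 - s ^ 2)) /
        (1 - (1 + specNorm X ^ 2) * s ^ 2) := by
  have ha : 0 ≤ specNorm X := norm_nonneg _
  have hden : 0 < 1 - (1 + specNorm X ^ 2) * s ^ 2 := by linarith
  refine ContinuousLinearMap.opNorm_le_bound _ (by positivity) fun z => ?_
  set c := ‖toEuclideanLin (Y + X) z‖
  have hc : c = ‖toEuclideanLin Y z + toEuclideanLin X z‖ := by
    simp only [c, map_add, LinearMap.add_apply]
  have hYz : ‖toEuclideanLin Y z‖ ≤ c + specNorm X * ‖z‖ := by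
    calc ‖toEuclideanLin Y z‖ = ‖toEuclideanLin (Y + X) z - toEuclideanLin X z‖ := by simp
      _ ≤ c + specNorm X * ‖z‖ :=
        (norm_sub_le _ _).trans (by gcongr; exact norm_toEuclideanLin_le_specNorm_mul X z)
  have hc2 : c ^ 2 ≤ (1 + specNorm X ^ 2) * s ^ 2 * ‖blockVec (toEuclideanLin Y z) z‖ ^ 2 := by
    calc c ^ 2 ≤ (√(1 + specNorm X ^ 2) * (s * ‖blockVec (toEuclideanLin Y z) z‖)) ^ 2 := by
          gcongr; exact hc ▸ h z
      _ = _ := by rw [mul_pow, mul_pow, Real.sq_sqrt (by positivity)]; ring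
  refine le_mul_of_sq_le_sin_sq_mul hs (norm_nonneg _) hτ (hc2.trans ?_)
  rw [norm_blockVec_sq]
  gcongr
  exact hYz

/-- If s = ‖sin∠(col(A;B), col(X₀;−I))‖ < 1/√(1+‖X₀‖²) then B is nonsingular and
‖AB⁻¹ + X₀‖ ≤ (1+‖X₀‖²)(‖X₀‖s² + s√(1−s²)) / (1 − (1+‖X₀‖²)s²). -/
theorem sin_angle_distance_bound {n d : ℕ}
    (X₀ A : Matrix (Fin n) (Fin d) ℝ) (B : Matrix (Fin d) (Fin d) ℝ)
    (hrank : (Matrix.fromRows A B).rank = d)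
    (s : ℝ)
    (hs : s = sinAngle (colSpaceE (Matrix.fromRows A B))
        (colSpaceE (Matrix.fromRows X₀ (-1 : Matrix (Fin d) (Fin d) ℝ))))
    (hsin : s < 1 / Real.sqrt (1 + specNorm X₀ ^ 2)) :
    IsUnit B.det ∧
      specNorm (A * B⁻¹ + X₀) ≤
        (1 + specNorm X₀ ^ 2) * (specNorm X₀ * s ^ 2 + s * Real.sqrt (1 - s ^ 2)) /
          (1 - (1 + specNorm X₀ ^ 2) * s ^ 2) := by
  have hs0 : 0 ≤ s := hs ▸ norm_nonneg _
  have hκ : √(1 + specNorm X₀ ^ 2) * s < 1 := by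
    rwa [lt_div_iff₀ (by positivity), mul_comm] at hsin
  have hτ : (1 + specNorm X₀ ^ 2) * s ^ 2 < 1 := by
    rw [← Real.sq_sqrt (by positivity : (0 : ℝ) ≤ 1 + specNorm X₀ ^ 2), ← mul_pow]
    exact pow_lt_one₀ (by positivity) hκ two_ne_zero
  have hkey : ∀ x, ‖toEuclideanLin A x + toEuclideanLin X₀ (toEuclideanLin B x)‖ ≤
      √(1 + specNorm X₀ ^ 2) * (s * ‖blockVec (toEuclideanLin A x) (toEuclideanLin B x)‖) :=
    fun x => hs ▸ norm_add_toEuclideanLin_le_sinAngle X₀ ⟨x, toEuclideanLin_fromRows A B x⟩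
  have hdet : IsUnit B.det := by
    refine isUnit_det_of_rank_fromRows A B (by rwa [Fintype.card_fin]) fun x hBx => ?_
    have hBx' : toEuclideanLin B (WithLp.toLp 2 x) = 0 := by simp [hBx]
    have h := hkey (WithLp.toLp 2 x)
    set u := toEuclideanLin A (WithLp.toLp 2 x)
    rw [hBx', map_zero, add_zero, norm_blockVec_zero_right, ← mul_assoc] at h
    have hu0 : u = 0 := norm_le_zero_iff.mp (by nlinarith [norm_nonneg u])
    simpa [u] using congrArg WithLp.ofLp hu0
  refine ⟨hdet, specNorm_add_le_of_norm_le_blockVec _ X₀ hs0 hτ fun z => ?_⟩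
  have hBB : toEuclideanLin B (toEuclideanLin B⁻¹ z) = z := by
    rw [← LinearMap.comp_apply, ← toLpLin_mul_same, mul_nonsing_inv _ hdet, toLpLin_one,
      LinearMap.id_apply]
  simpa [hBB] using hkey (toEuclideanLin B⁻¹ z)
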